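/- In the proposed non-stationary context tree source, if the per-component predictive probability p(x_t | x^{t−1}, c) depends on the change pattern c only through the last change point τ_t(c), then the full Bayes mixture over all 2^{N−1} change patterns collapses to a sum over t terms: AP*(x_t|x^{t−1}) = Σ_{τ=1}^{t} q(x_t | x_τ … x_{t−1}) · v(τ | x^{t−1}), where v(τ | x^{t−1}) = Σ_{c : τ_t(c) = τ} π(c | x^{t−1}). -/
import Mathlib


/-- `τ_t(c)`: the largest (1-indexed) change point `≤ t` of the change pattern `c`
(time `s ∈ {1,…,N}` is represented by the index `s-1 : Fin N`). -/
def lastCP {N : ℕ} (c : Fin N → Bool) (t : ℕ) : ℕ :=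
  ((Finset.univ.filter (fun i : Fin N => i.val < t ∧ c i = true)).sup
    (fun i : Fin N => i.val)) + 1

/-- If the per-pattern predictive probability `p(x_t | x^{t-1}, c)` (here `pred c`)
depends on the change pattern `c` only through the last change point `τ_t(c)`, via
`pred c = q(x_t | x_{τ_t(c)} … x_{t-1})`, then the full Bayes mixture over all
change patterns (with posterior weights `post c = π(c | x^{t-1})`) collapses to a sum
over `t` terms indexed by the last change point:
`AP*(x_t|x^{t-1}) = Σ_{τ=1}^t q(x_t | x_τ … x_{t-1}) · v(τ | x^{t-1})` with
`v(τ | x^{t-1}) = Σ_{c : τ_t(c) = τ} π(c | x^{t-1})`. -/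
theorem stmt9 (N t : ℕ) (hN : 0 < N) (ht : 1 ≤ t) (htN : t ≤ N)
    (post : (Fin N → Bool) → ℝ) (hpost : ∀ c, 0 ≤ post c)
    (pred : (Fin N → Bool) → ℝ) (q : ℕ → ℝ)
    (hdep : ∀ c : Fin N → Bool, c ⟨0, hN⟩ = true → pred c = q (lastCP c t)) :
    ∑ c ∈ Finset.univ.filter (fun c : Fin N → Bool => c ⟨0, hN⟩ = true),
        post c * pred c =
      ∑ τ ∈ Finset.Icc 1 t, q τ *
        ∑ c ∈ Finset.univ.filter
            (fun c : Fin N → Bool => c ⟨0, hN⟩ = true ∧ lastCP c t = τ),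
          post c := by
  have hmaps : ∀ c ∈ Finset.univ.filter (fun c : Fin N → Bool => c ⟨0, hN⟩ = true),
      lastCP c t ∈ Finset.Icc 1 t := by
    intro c _
    rw [Finset.mem_Icc]
    constructor
    · exact Nat.le_add_left 1 _
    · unfold lastCP
      have : ((Finset.univ.filter (fun i : Fin N => i.val < t ∧ c i = true)).sup
          (fun i : Fin N => i.val)) ≤ t - 1 := by
        apply Finset.sup_le
        intro i hi
        rw [Finset.mem_filter] at hi
        omega
      omega
  have := Finset.sum_fiberwise_of_maps_to hmaps (fun c => post c * pred c)
  rw [← this]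
  apply Finset.sum_congr rfl
  intro τ hτ
  rw [Finset.mul_sum]
  rw [show (Finset.univ.filter
      (fun c : Fin N → Bool => c ⟨0, hN⟩ = true ∧ lastCP c t = τ)) =
    ((Finset.univ.filter (fun c : Fin N → Bool => c ⟨0, hN⟩ = true)).filter
      (fun c => lastCP c t = τ)) by
    rw [Finset.filter_filter]]
  apply Finset.sum_congr rfl
  intro c hc
  rw [Finset.mem_filter, Finset.mem_filter] at hc
  rw [hdep c hc.1.2, hc.2, mul_comm]
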